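/- arXiv:1201.0141 — 4 statements merged into one kernel-verified Lean document; each statement's English description precedes it below -/
import Mathlib

section
/- For every integer n ≥ 2 and t > 0, the function p_{2^n}(x,t) = (t(x²+t²)/(2^{n-2}π)) · Σ_{k odd, 1 ≤ k ≤ 2^{n-1}-1} cos(kπ/2^n)/(x⁴+t⁴+2x²t²cos(kπ/2^{n-1})) satisfies ∫_{-∞}^{∞} p_{2^n}(x,t) dx = 1. -/
/-!
With `θ = kπ / 2ⁿ` and `cos θ > 0`, the quartic `x⁴ + t⁴ + 2x²t² cos 2θ` factors as
`((x - t sin θ)² + (t cos θ)²) ((x + t sin θ)² + (t cos θ)²)`, and partial fractions turn the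
`k`-th summand, divided by `π`, into the average of the Cauchy densities with locations
`± t sin θ` and scale `t cos θ`. Hence `p_{2ⁿ}(·, t)` is the uniform mixture of `2ⁿ⁻¹` Cauchy
densities and has total mass one.
-/

open MeasureTheory Real ProbabilityTheory

lemma quartic_cos_two_mul_eq_mul (t θ x : ℝ) :
    x ^ 4 + t ^ 4 + 2 * x ^ 2 * t ^ 2 * cos (2 * θ)
      = ((x - t * sin θ) ^ 2 + (t * cos θ) ^ 2) * ((x + t * sin θ) ^ 2 + (t * cos θ) ^ 2) := by
  linear_combination (2 * x ^ 2 * t ^ 2 - t ^ 4 * (1 + sin θ ^ 2 + cos θ ^ 2)) * sin_sq_add_cos_sq θ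
    + 2 * x ^ 2 * t ^ 2 * cos_two_mul θ

lemma div_quartic_eq_cauchyPDFReal_add {t θ : ℝ} (h : 0 < t * cos θ) (x : ℝ) :
    t * (x ^ 2 + t ^ 2) * cos θ / (π * (x ^ 4 + t ^ 4 + 2 * x ^ 2 * t ^ 2 * cos (2 * θ)))
      = (cauchyPDFReal (t * sin θ) (t * cos θ).toNNReal x
          + cauchyPDFReal (-(t * sin θ)) (t * cos θ).toNNReal x) / 2 := by
  have hγ : 0 < t ^ 2 * cos θ ^ 2 := by rw [← mul_pow]; positivity
  have hA : (x - t * sin θ) ^ 2 + t ^ 2 * cos θ ^ 2 ≠ 0 := by positivity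
  have hB : (x + t * sin θ) ^ 2 + t ^ 2 * cos θ ^ 2 ≠ 0 := by positivity
  rw [cauchyPDFReal_def, cauchyPDFReal_def, Real.coe_toNNReal _ h.le,
    quartic_cos_two_mul_eq_mul, sub_neg_eq_add]
  field_simp
  linear_combination (-(2 * t ^ 3 * cos θ)) * sin_sq_add_cos_sq θ

lemma integrable_div_quartic {t θ : ℝ} (h : 0 < t * cos θ) :
    Integrable fun x : ℝ =>
      t * (x ^ 2 + t ^ 2) * cos θ / (π * (x ^ 4 + t ^ 4 + 2 * x ^ 2 * t ^ 2 * cos (2 * θ))) := by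
  simp_rw [div_quartic_eq_cauchyPDFReal_add h]
  fun_prop

lemma integral_div_quartic_eq_one {t θ : ℝ} (h : 0 < t * cos θ) :
    ∫ x : ℝ, t * (x ^ 2 + t ^ 2) * cos θ /
      (π * (x ^ 4 + t ^ 4 + 2 * x ^ 2 * t ^ 2 * cos (2 * θ))) = 1 := by
  have hγ : (t * cos θ).toNNReal ≠ 0 := by simpa using h
  simp_rw [div_quartic_eq_cauchyPDFReal_add h]
  rw [integral_div, integral_add (integrable_cauchyPDFReal _) (integrable_cauchyPDFReal _),
    integral_cauchyPDFReal_eq_one _ hγ, integral_cauchyPDFReal_eq_one _ hγ]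
  norm_num

lemma cos_mul_pi_div_two_mul_pos {a N : ℝ} (ha : 0 ≤ a) (haN : a < N) :
    0 < cos (a * π / (2 * N)) := by
  have hN : 0 < N := ha.trans_lt haN
  apply cos_pos_of_mem_Ioo
  constructor
  · have : 0 ≤ a * π / (2 * N) := by positivity
    linarith [pi_pos]
  · rw [div_lt_div_iff₀ (by positivity) two_pos]
    nlinarith [pi_pos]

lemma card_filter_odd_Icc (N : ℕ) : ((Finset.Icc 1 (2 * N - 1)).filter Odd).card = N := by
  have : (Finset.Icc 1 (2 * N - 1)).filter Odd = (Finset.range N).image (fun i => 2 * i + 1) := by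
    ext k
    simp only [Finset.mem_filter, Finset.mem_Icc, Finset.mem_image, Finset.mem_range]
    constructor
    · rintro ⟨hk, r, rfl⟩
      exact ⟨r, by omega, rfl⟩
    · rintro ⟨i, hi, rfl⟩
      exact ⟨by omega, i, rfl⟩
  rw [this, Finset.card_image_of_injective _ (fun a b hab => by omega), Finset.card_range]

theorem stmt_3 (n : ℕ) (hn : 2 ≤ n) (t : ℝ) (ht : 0 < t) :
    ∫ x : ℝ, (t * (x ^ 2 + t ^ 2) / (2 ^ (n - 2) * Real.pi)) *
      ∑ k ∈ (Finset.Icc (1 : ℕ) (2 ^ (n - 1) - 1)).filter (fun k => Odd k),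
        Real.cos ((k : ℝ) * Real.pi / 2 ^ n) /
          (x ^ 4 + t ^ 4 + 2 * x ^ 2 * t ^ 2 * Real.cos ((k : ℝ) * Real.pi / 2 ^ (n - 1)))
    = 1 := by
  obtain ⟨m, rfl⟩ : ∃ m, n = m + 2 := ⟨n - 2, by omega⟩
  rw [show m + 2 - 1 = m + 1 by omega, Nat.add_sub_cancel]
  set S := (Finset.Icc 1 (2 ^ (m + 1) - 1)).filter Odd
  have hcard : S.card = 2 ^ m := by simp only [S, pow_succ', card_filter_odd_Icc]
  have hpos : ∀ k ∈ S, 0 < t * cos (k * π / 2 ^ (m + 2)) := by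
    intro k hk
    have hk : k < 2 ^ (m + 1) := by
      have := (Finset.mem_Icc.1 (Finset.mem_filter.1 hk).1).2
      have := Nat.two_pow_pos (m + 1)
      omega
    rw [pow_succ' _ (m + 1)]
    exact mul_pos ht (cos_mul_pi_div_two_mul_pos k.cast_nonneg (by exact_mod_cast hk))
  have hsplit : ∀ x : ℝ, (t * (x ^ 2 + t ^ 2) / (2 ^ m * π)) *
      ∑ k ∈ S, cos (k * π / 2 ^ (m + 2)) /
        (x ^ 4 + t ^ 4 + 2 * x ^ 2 * t ^ 2 * cos (k * π / 2 ^ (m + 1)))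
      = ∑ k ∈ S, (2 ^ m)⁻¹ * (t * (x ^ 2 + t ^ 2) * cos (k * π / 2 ^ (m + 2)) /
        (π * (x ^ 4 + t ^ 4 + 2 * x ^ 2 * t ^ 2 * cos (2 * (k * π / 2 ^ (m + 2)))))) := by
    intro x
    rw [Finset.mul_sum]
    refine Finset.sum_congr rfl fun k _ => ?_
    rw [show 2 * (k * π / 2 ^ (m + 2)) = k * π / 2 ^ (m + 1) by rw [pow_succ _ (m + 1)]; ring]
    field_simp
  rw [integral_congr_ae (ae_of_all _ hsplit),
    integral_finsetSum _ fun k hk => (integrable_div_quartic (hpos k hk)).const_mul _,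
    Finset.sum_congr rfl fun k hk => by
      rw [integral_const_mul, integral_div_quartic_eq_one (hpos k hk)],
    Finset.sum_const, hcard, nsmul_eq_mul]
  simp
end

section
/- For t > 0, the function p₄(x,t) = (t/(√2·π)) · (x²+t²)/(x⁴+t⁴) satisfies the fourth-order Laplace equation ∂⁴p₄/∂t⁴ + ∂⁴p₄/∂x⁴ = 0 for all x ∈ ℝ, t > 0. -/
/-!
With `ζ₈ = exp (π i / 4)` one has `x⁴ + t⁴ = (x - ζ₈ t)(x + ζ₈ t)(x - ζ₈³ t)(x + ζ₈³ t)`, and partial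
fractions give `p₄(x, t) = (2π)⁻¹ · Im ((x - ζ₈ t)⁻¹ - (x + ζ₈ t)⁻¹)` for `t ≠ 0`. For any `b` with
`b⁴ = -1`, the chain rule gives `∂ₜ⁴ (x + b t)⁻¹ = b⁴ · ∂ₓ⁴ (x + b t)⁻¹ = -∂ₓ⁴ (x + b t)⁻¹`, so each of
the two terms solves `∂ₜ⁴ u + ∂ₓ⁴ u = 0`, and so does `p₄`.
-/

open Set Filter Nat Real Complex

theorem iteratedDeriv_eqOn_of_hasDerivAt {𝕜 F : Type*} [NontriviallyNormedField 𝕜]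
    [NormedAddCommGroup F] [NormedSpace 𝕜 F] {g : ℕ → 𝕜 → F} {U : Set 𝕜} (hU : IsOpen U)
    (hg : ∀ n, ∀ s ∈ U, HasDerivAt (g n) (g (n + 1) s) s) (n : ℕ) :
    EqOn (iteratedDeriv n (g 0)) (g n) U := by
  induction n with
  | zero => simp [EqOn]
  | succ n ih =>
    intro s hs
    rw [iteratedDeriv_succ, (ih.eventuallyEq_of_mem (hU.mem_nhds hs)).deriv_eq]
    exact (hg n s hs).deriv

theorem ContinuousLinearMap.iteratedDeriv_comp_left {𝕜 F G : Type*} [NontriviallyNormedField 𝕜]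
    [NormedAddCommGroup F] [NormedSpace 𝕜 F] [NormedAddCommGroup G] [NormedSpace 𝕜 G]
    (L : F →L[𝕜] G) {f : 𝕜 → F} {x : 𝕜} {n : ℕ} (hf : ContDiffAt 𝕜 n f x) :
    iteratedDeriv n (L ∘ f) x = L (iteratedDeriv n f x) := by
  simp [iteratedDeriv_eq_iteratedFDeriv, L.iteratedFDeriv_comp_left hf le_rfl]

@[fun_prop]
theorem Complex.contDiff_ofReal {n : WithTop ℕ∞} : ContDiff ℝ n ((↑) : ℝ → ℂ) :=
  ofRealCLM.contDiff

theorem contDiffAt_im_inv {f : ℝ → ℂ} {s : ℝ} {n : WithTop ℕ∞} (hf : ContDiffAt ℝ n f s)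
    (h : f s ≠ 0) : ContDiffAt ℝ n (fun s => ((f s)⁻¹).im) s :=
  imCLM.contDiff.contDiffAt.comp s (hf.inv h)

section Affine

variable (a b : ℂ)

theorem hasDerivAt_affine_zpow (m : ℤ) {s : ℝ} (hs : a + b * s ≠ 0) :
    HasDerivAt (fun s : ℝ => (a + b * s) ^ m) (m * b * (a + b * s) ^ (m - 1)) s := by
  have hlin : HasDerivAt (fun s : ℝ => a + b * s) b s := by
    simpa using (((hasDerivAt_id s).ofReal_comp).const_mul b).const_add a
  rw [mul_right_comm]
  exact (hasDerivAt_zpow m _ (Or.inl hs)).comp s hlin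

theorem iteratedDeriv_inv_affine (n : ℕ) {s : ℝ} (hs : a + b * s ≠ 0) :
    iteratedDeriv n (fun s : ℝ => (a + b * s)⁻¹) s
      = (-1) ^ n * n ! * b ^ n * (a + b * s) ^ (-1 - n : ℤ) := by
  set g : ℕ → ℝ → ℂ := fun n s => (-1) ^ n * n ! * b ^ n * (a + b * s) ^ (-1 - n : ℤ)
  have hg0 : g 0 = fun s : ℝ => (a + b * s)⁻¹ := by funext s; simp [g]
  have hU : IsOpen {s : ℝ | a + b * s ≠ 0} := isOpen_ne_fun (by fun_prop) continuous_const
  refine hg0 ▸ iteratedDeriv_eqOn_of_hasDerivAt (g := g) hU (fun n s hs => ?_) n hs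
  refine ((hasDerivAt_affine_zpow a b (-1 - n) hs).const_mul
    ((-1) ^ n * n ! * b ^ n)).congr_deriv ?_
  simp only [g, factorial_succ, pow_succ]
  push_cast
  rw [show (-1 - ((n : ℤ) + 1)) = -1 - (n : ℤ) - 1 by ring]
  ring

theorem iteratedDeriv_im_inv_affine (n : ℕ) {s : ℝ} (hs : a + b * s ≠ 0) :
    iteratedDeriv n (fun s : ℝ => ((a + b * s)⁻¹).im) s
      = ((-1) ^ n * n ! * b ^ n * (a + b * s) ^ (-1 - n : ℤ)).im := by
  rw [← iteratedDeriv_inv_affine a b n hs]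
  have hf : ContDiffAt ℝ n (fun s : ℝ => (a + b * s)⁻¹) s := by fun_prop (disch := assumption)
  exact imCLM.iteratedDeriv_comp_left hf

end Affine

theorem iteratedDeriv_four_add_iteratedDeriv_four_im_inv {b : ℂ} (hb : b ^ 4 = -1) {x t : ℝ}
    (h : (x : ℂ) + b * t ≠ 0) :
    iteratedDeriv 4 (fun s : ℝ => (((x : ℂ) + b * s)⁻¹).im) t
      + iteratedDeriv 4 (fun y : ℝ => (((y : ℂ) + b * t)⁻¹).im) x = 0 := by
  have hx : (fun y : ℝ => (((y : ℂ) + b * t)⁻¹).im) = fun y : ℝ => ((b * t + 1 * y)⁻¹).im := by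
    funext y; rw [one_mul, add_comm]
  rw [hx, iteratedDeriv_im_inv_affine _ _ 4 h,
    iteratedDeriv_im_inv_affine _ _ 4 (by rwa [one_mul, add_comm]), hb, one_pow, one_mul, add_comm (b * t), ← add_im]
  convert zero_im using 2
  ring

theorem ofReal_add_mul_ofReal_ne_zero {c : ℂ} (hc : c.im ≠ 0) (x : ℝ) {s : ℝ} (hs : s ≠ 0) :
    (x : ℂ) + c * s ≠ 0 := fun h => by
  simpa [hc, hs] using congrArg Complex.im h

theorem im_inv_ofReal_add_mul_ofReal (c : ℂ) (x s : ℝ) :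
    (((x : ℂ) + c * s)⁻¹).im = -(c.im * s) / ((x + c.re * s) ^ 2 + (c.im * s) ^ 2) := by
  simp [Complex.inv_im, Complex.normSq_apply, sq]

noncomputable def ζ₈ : ℂ := exp (π / 4 * I)

theorem ζ₈_pow_four : ζ₈ ^ 4 = -1 := by
  rw [ζ₈, ← Complex.exp_nat_mul]
  push_cast
  rw [show (4 : ℂ) * (π / 4 * I) = π * I by ring, Complex.exp_pi_mul_I]

theorem ζ₈_re : ζ₈.re = √2 / 2 := by
  simp [ζ₈, Complex.exp_re, Real.cos_pi_div_four]

theorem ζ₈_im : ζ₈.im = √2 / 2 := by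
  simp [ζ₈, Complex.exp_im, Real.sin_pi_div_four]

theorem p₄_eq_im_inv_sub_inv (x s : ℝ) (hs : s ≠ 0) :
    s / (√2 * π) * (x ^ 2 + s ^ 2) / (x ^ 4 + s ^ 4)
      = (2 * π)⁻¹ * ((((x : ℂ) + -ζ₈ * s)⁻¹).im - (((x : ℂ) + ζ₈ * s)⁻¹).im) := by
  have h2 : √2 ^ 2 = 2 := Real.sq_sqrt (by norm_num)
  have hp : 0 < (x + √2 / 2 * s) ^ 2 + (√2 / 2 * s) ^ 2 := by positivity
  have hm : 0 < (x - √2 / 2 * s) ^ 2 + (√2 / 2 * s) ^ 2 := by positivity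
  rw [im_inv_ofReal_add_mul_ofReal, im_inv_ofReal_add_mul_ofReal]
  simp only [neg_re, neg_im, ζ₈_re, ζ₈_im, neg_mul, neg_sq, ← sub_eq_add_neg]
  field_simp
  ring_nf
  rw [show √2 ^ 4 = (√2 ^ 2) ^ 2 by ring, h2]
  ring

theorem stmt_4 (x t : ℝ) (ht : 0 < t) :
    iteratedDeriv 4 (fun s : ℝ => s / (Real.sqrt 2 * Real.pi) * (x ^ 2 + s ^ 2) / (x ^ 4 + s ^ 4)) t
      + iteratedDeriv 4 (fun y : ℝ => t / (Real.sqrt 2 * Real.pi) * (y ^ 2 + t ^ 2) / (y ^ 4 + t ^ 4)) x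
    = 0 := by
  have hne (c : ℂ) (hc : c.im ≠ 0) : (x : ℂ) + c * t ≠ 0 :=
    ofReal_add_mul_ofReal_ne_zero hc x ht.ne'
  have hζ := hne ζ₈ (by simp [ζ₈_im])
  have hnegζ := hne (-ζ₈) (by simp [ζ₈_im])
  have hT := (eventually_ne_nhds ht.ne').mono fun s hs => p₄_eq_im_inv_sub_inv x s hs
  have hX := funext fun y => p₄_eq_im_inv_sub_inv y t ht.ne'
  rw [EventuallyEq.iteratedDeriv_eq 4 hT, hX, iteratedDeriv_const_mul_field,
    iteratedDeriv_const_mul_field, iteratedDeriv_fun_sub ?_ ?_, iteratedDeriv_fun_sub ?_ ?_]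
  · have hneg : (-ζ₈) ^ 4 = -1 := by rw [neg_pow, ζ₈_pow_four]; norm_num
    linear_combination (2 * π)⁻¹ * (iteratedDeriv_four_add_iteratedDeriv_four_im_inv hneg hnegζ
      - iteratedDeriv_four_add_iteratedDeriv_four_im_inv ζ₈_pow_four hζ)
  all_goals exact contDiffAt_im_inv (by fun_prop) ‹_›
end

section
/- Let C be a Cauchy random variable with density y ↦ (1/π)·s/(y² + s²) where s = t·cos(kπ/2^n), t > 0, n ≥ 2, k odd with 1 ≤ k ≤ 2^{n-1}-1. Then W = |C - t·sin(kπ/2^n)| has density on (0,∞) given by f(w) = 2t(w²+t²)cos(kπ/2^n) / (π(w⁴+t⁴+2w²t²cos(kπ/2^{n-1}))). -/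
open MeasureTheory Set Real

/-! Shifting by `a = t sin θ` and folding at `0`, the density of `W` at `w > 0` is the sum of the
Cauchy density (scale `t cos θ`, `θ = kπ/2ⁿ`) at `w + a` and at `-w + a`. Since
`sin² θ + cos² θ = 1`, the two denominators sum to `2(w² + t²)` and multiply to
`w⁴ + t⁴ + 2w²t² cos 2θ`, and `kπ/2ⁿ⁻¹ = 2θ`. -/

theorem MeasureTheory.MeasurePreserving.map_withDensity_comp {α β : Type*} [MeasurableSpace α]
    [MeasurableSpace β] {μ : Measure α} {ν : Measure β} {e : α → β} (he : MeasurePreserving e μ ν)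
    {f : β → ENNReal} (hf : Measurable f) :
    (μ.withDensity (f ∘ e)).map e = ν.withDensity f := by
  ext s hs
  rw [Measure.map_apply he.measurable hs, withDensity_apply _ (he.measurable hs),
    withDensity_apply _ hs, ← he.setLIntegral_comp_preimage hs hf]
  rfl

theorem map_sub_const_withDensity {f : ℝ → ENNReal} (hf : Measurable f) (a : ℝ) :
    (volume.withDensity f).map (· - a) = volume.withDensity fun x => f (x + a) := by
  have hmp := measurePreserving_sub_right (volume : Measure ℝ) a
  simpa [Function.comp_def] using hmp.map_withDensity_comp (hf.comp (measurable_add_const a))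

theorem map_abs_withDensity {g : ℝ → ENNReal} (hg : Measurable g) :
    (volume.withDensity g).map abs = volume.withDensity ((Ioi 0).indicator fun w => g w + g (-w)) := by
  ext s hs
  have hpos : abs ⁻¹' s ∩ Ioi 0 = s ∩ Ioi 0 := by
    ext x
    simp +contextual [abs_of_pos]
  have hneg : abs ⁻¹' s \ Ioi 0 = Neg.neg ⁻¹' (s ∩ Ici 0) := by
    ext x
    simp +contextual [abs_of_nonpos]
  have hreflect : ∫⁻ x in Neg.neg ⁻¹' (s ∩ Ici 0), g x = ∫⁻ w in s ∩ Ioi 0, g (-w) := by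
    rw [setLIntegral_congr (ae_eq_refl s |>.inter Ioi_ae_eq_Ici)]
    simpa using ((Measure.measurePreserving_neg volume).setLIntegral_comp_preimage
      (hs.inter (measurableSet_Ici (a := 0))).neg hg).symm
  rw [Measure.map_apply measurable_abs hs, withDensity_apply _ (measurable_abs hs),
    withDensity_apply _ hs, setLIntegral_indicator measurableSet_Ioi, inter_comm (Ioi 0) s,
    ← lintegral_inter_add_sdiff _ _ measurableSet_Ioi, hpos, hneg, hreflect,
    lintegral_add_left hg]

theorem map_abs_sub_withDensity {f : ℝ → ENNReal} (hf : Measurable f) (a : ℝ) :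
    (volume.withDensity f).map (fun y => |y - a|) =
      volume.withDensity ((Ioi 0).indicator fun w => f (w + a) + f (-w + a)) := by
  calc _ = ((volume.withDensity f).map (· - a)).map abs :=
        (Measure.map_map measurable_abs (measurable_sub_const a)).symm
    _ = _ := by
      rw [map_sub_const_withDensity hf]
      exact map_abs_withDensity (hf.comp (measurable_add_const a))

theorem cauchy_density_add_reflect (t θ w : ℝ) (hc : t * cos θ ≠ 0) :
    1 / π * (t * cos θ) / ((w + t * sin θ) ^ 2 + (t * cos θ) ^ 2) +
      1 / π * (t * cos θ) / ((-w + t * sin θ) ^ 2 + (t * cos θ) ^ 2) =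
    2 * t * (w ^ 2 + t ^ 2) * cos θ / (π * (w ^ 4 + t ^ 4 + 2 * w ^ 2 * t ^ 2 * cos (2 * θ))) := by
  have hpyth := sin_sq_add_cos_sq θ
  set D₁ := (w + t * sin θ) ^ 2 + (t * cos θ) ^ 2
  set D₂ := (-w + t * sin θ) ^ 2 + (t * cos θ) ^ 2
  have hD₁ : D₁ ≠ 0 := by positivity
  have hD₂ : D₂ ≠ 0 := by positivity
  have hsum : D₁ + D₂ = 2 * (w ^ 2 + t ^ 2) := by
    linear_combination (2 * t ^ 2) * hpyth
  have hprod : D₁ * D₂ = w ^ 4 + t ^ 4 + 2 * w ^ 2 * t ^ 2 * cos (2 * θ) := by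
    rw [cos_two_mul]
    linear_combination (t ^ 4 * (sin θ ^ 2 + cos θ ^ 2 + 1) - 2 * w ^ 2 * t ^ 2) * hpyth
  calc _ = 1 / π * (t * cos θ) * (D₁ + D₂) / (D₁ * D₂) := by field_simp; ring
    _ = _ := by rw [hsum, hprod]; field_simp

theorem cos_pos_of_two_mul_lt_two_pow {k n : ℕ} (h : 2 * k < 2 ^ n) : 0 < cos (k * π / 2 ^ n) := by
  apply cos_pos_of_mem_Ioo
  constructor
  · linarith [pi_pos, show 0 ≤ k * π / 2 ^ n by positivity]
  · rw [div_lt_div_iff₀ (by positivity) two_pos]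
    have : (2 * k : ℝ) < 2 ^ n := by exact_mod_cast h
    nlinarith [pi_pos]

theorem div_two_pow_pred (x : ℝ) {n : ℕ} (hn : n ≠ 0) : x / 2 ^ (n - 1) = 2 * (x / 2 ^ n) := by
  rw [← pow_sub_one_mul hn 2]
  field_simp

theorem stmt_7_general (n : ℕ) (hn : 2 ≤ n) (k : ℕ)
    (hk2 : k ≤ 2 ^ (n - 1) - 1) (t : ℝ) (ht : 0 < t) :
    Measure.map (fun y : ℝ => |y - t * Real.sin ((k : ℝ) * Real.pi / 2 ^ n)|)
      (volume.withDensity fun y : ℝ =>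
        ENNReal.ofReal ((1 / Real.pi) * (t * Real.cos ((k : ℝ) * Real.pi / 2 ^ n)) /
          (y ^ 2 + (t * Real.cos ((k : ℝ) * Real.pi / 2 ^ n)) ^ 2)))
    = volume.withDensity (fun w : ℝ =>
        if 0 < w then
          ENNReal.ofReal (2 * t * (w ^ 2 + t ^ 2) * Real.cos ((k : ℝ) * Real.pi / 2 ^ n) /
            (Real.pi * (w ^ 4 + t ^ 4 + 2 * w ^ 2 * t ^ 2 * Real.cos ((k : ℝ) * Real.pi / 2 ^ (n - 1)))))
        else 0) := by
  have h2k : 2 * k < 2 ^ n := by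
    have := pow_sub_one_mul (show n ≠ 0 by omega) 2
    have := Nat.one_le_two_pow (n := n - 1)
    omega
  have htc : 0 < t * cos (k * π / 2 ^ n) := mul_pos ht (cos_pos_of_two_mul_lt_two_pow h2k)
  rw [map_abs_sub_withDensity (by fun_prop), div_two_pow_pred _ (by omega : n ≠ 0)]
  congr 1
  funext w
  simp only [indicator_apply, mem_Ioi]
  split_ifs
  · rw [← ENNReal.ofReal_add (by positivity) (by positivity),
      cauchy_density_add_reflect _ _ _ htc.ne']
  · rfl

theorem stmt_7 (n : ℕ) (hn : 2 ≤ n) (k : ℕ) (hk : Odd k) (hk1 : 1 ≤ k)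
    (hk2 : k ≤ 2 ^ (n - 1) - 1) (t : ℝ) (ht : 0 < t) :
    Measure.map (fun y : ℝ => |y - t * Real.sin ((k : ℝ) * Real.pi / 2 ^ n)|)
      (volume.withDensity fun y : ℝ =>
        ENNReal.ofReal ((1 / Real.pi) * (t * Real.cos ((k : ℝ) * Real.pi / 2 ^ n)) /
          (y ^ 2 + (t * Real.cos ((k : ℝ) * Real.pi / 2 ^ n)) ^ 2)))
    = volume.withDensity (fun w : ℝ =>
        if 0 < w then
          ENNReal.ofReal (2 * t * (w ^ 2 + t ^ 2) * Real.cos ((k : ℝ) * Real.pi / 2 ^ n) /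
            (Real.pi * (w ^ 4 + t ^ 4 + 2 * w ^ 2 * t ^ 2 * Real.cos ((k : ℝ) * Real.pi / 2 ^ (n - 1)))))
        else 0) :=
  stmt_7_general n hn k hk2 t ht
end

section
/- For every k ∈ ℕ with k ≥ 1 and t > 0, the function f(x,t) = t·cos(π/(2(2k+1))) / (π·[(x + (-1)^{k+1}·t·sin(π/(2(2k+1))))² + t²·cos²(π/(2(2k+1)))]) satisfies the odd-order Laplace equation ∂^{2k+1}f/∂t^{2k+1} + ∂^{2k+1}f/∂x^{2k+1} = 0 for all x ∈ ℝ, t > 0. -/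
/-!
With `θ = π / (2(2k+1))` and `w = (-1)^(k+1) sin θ - i cos θ`, the function is
`f(x, t) = Im ((x + t w)⁻¹) / π`. Differentiating `(x + t w)⁻¹` `n` times in `t` gives `w ^ n`
times its `n`-th derivative in `x`, so the sum of the two is proportional to `w ^ (2k+1) + 1`,
which vanishes because `w = -i e^{± iθ}` is a `(2k+1)`-th root of `-1`.
-/

open Complex Finset

theorem hasDerivAt_im_mul_zpow (a c w : ℂ) (m : ℤ) {s : ℝ} (hs : c + s * w ≠ 0) :
    HasDerivAt (fun u : ℝ => (a * (c + u * w) ^ m).im)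
      ((a * m * w * (c + s * w) ^ (m - 1)).im) s := by
  have hlin : HasDerivAt (fun z : ℂ => c + z * w) w s := by
    simpa using ((hasDerivAt_id (s : ℂ)).mul_const w).const_add c
  have hcomplex := ((hasDerivAt_zpow m _ (.inl hs)).comp (s : ℂ) hlin).const_mul a
  replace hcomplex : HasDerivAt (fun z : ℂ => a * (c + z * w) ^ m)
      (a * m * w * (c + s * w) ^ (m - 1)) s :=
    hcomplex.congr_deriv (by ring)
  exact imCLM.hasFDerivAt.comp_hasDerivAt s hcomplex.comp_ofReal

theorem eqOn_iteratedDeriv_im_mul_zpow (a c w : ℂ) (m : ℤ) (n : ℕ) :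
    Set.EqOn (iteratedDeriv n (fun u : ℝ => (a * (c + u * w) ^ m).im))
      (fun u => (a * (∏ i ∈ range n, ((m : ℂ) - i)) * w ^ n * (c + u * w) ^ (m - n)).im)
      {u | c + u * w ≠ 0} := by
  induction n with
  | zero => intro s _; simp
  | succ n ih =>
    intro s hs
    have hopen : IsOpen {u : ℝ | c + u * w ≠ 0} :=
      isOpen_ne_fun (by fun_prop) continuous_const
    rw [iteratedDeriv_succ, (Filter.eventuallyEq_of_mem (hopen.mem_nhds hs) ih).deriv_eq,
      (hasDerivAt_im_mul_zpow _ c w _ hs).deriv, prod_range_succ]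
    push_cast
    ring_nf

theorem exp_neg_one_pow_mul_mul_I (j : ℕ) (φ : ℝ) :
    exp ((-1) ^ j * φ * I) = Real.cos φ + (-1) ^ j * Real.sin φ * I := by
  rw [exp_mul_I]
  rcases neg_one_pow_eq_or ℂ j with h | h <;> simp [h]

theorem mk_neg_one_pow_mul_sin_neg_cos_pow_eq_neg_one (k : ℕ) :
    (⟨(-1) ^ (k + 1) * Real.sin (Real.pi / (2 * (2 * k + 1))),
      -Real.cos (Real.pi / (2 * (2 * k + 1)))⟩ : ℂ) ^ (2 * k + 1) = -1 := by
  set θ := Real.pi / (2 * (2 * k + 1))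
  have hθ : ((2 * k + 1 : ℕ) : ℂ) * ((-1) ^ (k + 1) * θ * I) =
      (-1) ^ (k + 1) * (Real.pi / 2 : ℝ) * I := by
    have : (2 * k + 1 : ℂ) ≠ 0 := by exact_mod_cast (2 * k).succ_ne_zero
    simp only [θ]; push_cast; field_simp
  have hI : (-I) ^ (2 * k + 1) = (-1) ^ (k + 1) * I := by
    rw [pow_succ, pow_mul, neg_sq, I_sq]; ring
  calc _ = ((-I) * exp ((-1) ^ (k + 1) * θ * I)) ^ (2 * k + 1) := by
        rw [mk_eq_add_mul_I, exp_neg_one_pow_mul_mul_I]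
        congr 1
        simp only [ofReal_mul, ofReal_pow, ofReal_neg, ofReal_one]
        linear_combination (-1) ^ (k + 1) * (Real.sin θ : ℂ) * I_sq
    _ = ((-1) ^ (k + 1) * I) ^ 2 := by
        rw [mul_pow, ← exp_nat_mul, hθ, exp_neg_one_pow_mul_mul_I, hI, Real.cos_pi_div_two,
          Real.sin_pi_div_two]
        push_cast
        ring
    _ = -1 := by rw [mul_pow, ← pow_mul, pow_mul']; simp

theorem stmt_9 (k : ℕ) (hk : 1 ≤ k) (x t : ℝ) (ht : 0 < t) :
    iteratedDeriv (2 * k + 1)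
        (fun s : ℝ => s * Real.cos (Real.pi / (2 * (2 * k + 1))) /
          (Real.pi * ((x + (-1 : ℝ) ^ (k + 1) * s * Real.sin (Real.pi / (2 * (2 * k + 1)))) ^ 2
            + s ^ 2 * Real.cos (Real.pi / (2 * (2 * k + 1))) ^ 2))) t
      + iteratedDeriv (2 * k + 1)
        (fun y : ℝ => t * Real.cos (Real.pi / (2 * (2 * k + 1))) /
          (Real.pi * ((y + (-1 : ℝ) ^ (k + 1) * t * Real.sin (Real.pi / (2 * (2 * k + 1)))) ^ 2
            + t ^ 2 * Real.cos (Real.pi / (2 * (2 * k + 1))) ^ 2))) x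
    = 0 := by
  set θ := Real.pi / (2 * (2 * k + 1))
  set w : ℂ := ⟨(-1) ^ (k + 1) * Real.sin θ, -Real.cos θ⟩
  have hw : w ^ (2 * k + 1) = -1 := mk_neg_one_pow_mul_sin_neg_cos_pow_eq_neg_one k
  have hcos : 0 < Real.cos θ := by
    refine Real.cos_pos_of_mem_Ioo ⟨by linarith [show 0 < θ by positivity, Real.pi_pos], ?_⟩
    have : (1 : ℝ) ≤ k := by exact_mod_cast hk
    exact div_lt_div_of_pos_left Real.pi_pos (by norm_num) (by linarith)
  have hz : (x : ℂ) + t * w ≠ 0 := fun h =>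
    (mul_pos ht hcos).ne' (by simpa [w] using congrArg im h)
  have hcauchy : ∀ y s : ℝ, s * Real.cos θ /
      (Real.pi * ((y + (-1) ^ (k + 1) * s * Real.sin θ) ^ 2 + s ^ 2 * Real.cos θ ^ 2)) =
      (((Real.pi : ℂ)⁻¹) * (y + s * w) ^ (-1 : ℤ)).im := by
    intro y s
    rw [zpow_neg_one, ← ofReal_inv, im_ofReal_mul, inv_im, normSq_apply, inv_mul_eq_div, div_div,
      mul_comm _ Real.pi]
    simp only [add_re, add_im, ofReal_re, ofReal_im, mul_re, mul_im, w]
    ring_nf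
  simp_rw [hcauchy, show ∀ y : ℝ, (y : ℂ) + t * w = t * w + y * 1 from fun y => by ring]
  rw [eqOn_iteratedDeriv_im_mul_zpow _ _ _ _ _ hz,
    eqOn_iteratedDeriv_im_mul_zpow _ _ _ _ _
      (show (t : ℂ) * w + x * 1 ≠ 0 by rwa [mul_one, add_comm]),
    ← add_im, show (t : ℂ) * w + x * 1 = x + t * w by ring, one_pow, hw]
  convert zero_im using 2
  ring
end
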